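/- arXiv:2502.10553 — 3 statements merged into one kernel-verified Lean document; each statement's English description precedes it below -/
import Mathlib

section
/- Let X be a nonnegative real random variable with E[X]<∞ and P(X>0)>0. Let y_1,…,y_L be finitely many nonnegative reals with y_max := max{y_i : 1≤i≤L} > 0. Define g(x) = (1/x)·E[ X·e^{xX} / ∑_{j=1}^L e^{y_j X} ]. Then g is a convex continuous function on (0, y_max]. In particular, either g is strictly decreasing on (0, y_max), or g has a unique global minimum at some point x_* with 0<x_*<y_max, g being strictly decreasing on (0, x_*) and strictly increasing on (x_*, y_max). Furthermore, g(x)→∞ as x→0+ and, viewing g as an extended-real-valued function, g(x)→∞ as x→∞. -/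
/-!
For fixed `ω`, the integrand of `g` is `x ↦ (X/D) · e^{Xx}/x` with `D = ∑ⱼ e^{yⱼX}` independent of
`x`, a nonnegative multiple of `φ_c(x) = e^{cx}/x`, which is strictly convex on `(0, ∞)` since
`φ_c'' = e^{cx}((cx - 1)² + 1)/x³ > 0`. On `(0, y_max]` the integrand `X e^{xX}/D` is dominated by
`X`, so `g` is continuous there and, the multiple being positive on `{X > 0}`, strictly convex.
Since `g(x) ≥ E[X/D]/x`, `g` blows up at `0`; hence it attains its minimum on `(0, y_max]`, and
strict convexity gives the monotonicity on either side. At `∞` each integrand with `X > 0` tends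
to `∞`, so Fatou's lemma makes the expectation infinite in the limit.
-/

open MeasureTheory Filter Topology Set

/-- The function `g(x) = (1/x)·E[X e^{xX}/∑_j e^{y_j X}]`. -/
noncomputable def gfun {Ω : Type*} [MeasurableSpace Ω] (μ : Measure Ω)
    (X : Ω → ℝ) (L : ℕ) (y : Fin L → ℝ) (x : ℝ) : ℝ :=
  (1 / x) * ∫ ω, X ω * Real.exp (x * X ω) / ∑ j : Fin L, Real.exp (y j * X ω) ∂μ

open Real

theorem strictConvexOn_exp_mul_div (c : ℝ) :
    StrictConvexOn ℝ (Ioi 0) fun x => exp (c * x) / x := by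
  have hexp : ∀ x, HasDerivAt (fun x => exp (c * x)) (exp (c * x) * c) x := fun x => by
    simpa using ((hasDerivAt_id x).const_mul c).exp
  have hf' : ∀ x ≠ 0,
      HasDerivAt (fun x => exp (c * x) / x) (exp (c * x) * (c * x - 1) / x ^ 2) x :=
    fun x hx => ((hexp x).div (hasDerivAt_id' x) hx).congr_deriv (by field_simp)
  have hf'' : ∀ x ≠ 0, HasDerivAt (fun x => exp (c * x) * (c * x - 1) / x ^ 2)
      (exp (c * x) * ((c * x - 1) ^ 2 + 1) / x ^ 3) x := fun x hx => by
    have hlin : HasDerivAt (fun x => c * x - 1) c x := by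
      simpa using ((hasDerivAt_id x).const_mul c).sub_const 1
    exact (((hexp x).mul hlin).div (hasDerivAt_pow 2 x) (pow_ne_zero 2 hx)).congr_deriv
      (by simp only [Pi.mul_apply]; field_simp; ring)
  refine strictConvexOn_of_deriv2_pos' (convex_Ioi 0)
    (fun x hx => (hf' x (ne_of_gt hx)).continuousAt.continuousWithinAt) fun x (hx : 0 < x) => ?_
  have hderiv : deriv (fun x => exp (c * x) / x) =ᶠ[𝓝 x]
      fun x => exp (c * x) * (c * x - 1) / x ^ 2 := by
    filter_upwards [Ioi_mem_nhds hx] with t (ht : 0 < t) using (hf' t ht.ne').deriv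
  rw [Function.iterate_succ_apply', Function.iterate_one, hderiv.deriv_eq, (hf'' x hx.ne').deriv]
  positivity

theorem StrictConvexOn.const_mul {E : Type*} [AddCommMonoid E] [Module ℝ E] {s : Set E}
    {f : E → ℝ} {k : ℝ} (hf : StrictConvexOn ℝ s f) (hk : 0 < k) :
    StrictConvexOn ℝ s fun x => k * f x :=
  ⟨hf.1, fun x hx y hy hxy a b ha hb hab => calc
    k * f (a • x + b • y) < k * (a • f x + b • f y) :=
      mul_lt_mul_of_pos_left (hf.2 hx hy hxy ha hb hab) hk
    _ = a • (k * f x) + b • (k * f y) := by simp only [smul_eq_mul]; ring⟩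

theorem StrictConvexOn.integral {α E : Type*} [MeasurableSpace α] {μ : Measure α}
    [AddCommGroup E] [Module ℝ E] {s : Set E} {f : E → α → ℝ}
    (hint : ∀ x ∈ s, Integrable (f x) μ) (hconv : ∀ ω, ConvexOn ℝ s (f · ω))
    {A : Set α} (hA : 0 < μ A) (hstrict : ∀ ω ∈ A, StrictConvexOn ℝ s (f · ω)) :
    StrictConvexOn ℝ s fun x => ∫ ω, f x ω ∂μ := by
  obtain ⟨ω₀, hω₀⟩ := nonempty_of_measure_ne_zero hA.ne'
  refine ⟨(hstrict ω₀ hω₀).1, fun x hx z hz hxz a b ha hb hab => ?_⟩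
  have hmem : a • x + b • z ∈ s := (hstrict ω₀ hω₀).1 hx hz ha.le hb.le hab
  set gap : α → ℝ := fun ω => a * f x ω + b * f z ω - f (a • x + b • z) ω
  have hgap_nonneg : 0 ≤ gap := fun ω => by
    have := (hconv ω).2 hx hz ha.le hb.le hab
    simp only [smul_eq_mul] at this
    simp only [gap, Pi.zero_apply]
    linarith
  have hgap_pos : ∀ ω ∈ A, 0 < gap ω := fun ω hω => by
    have := (hstrict ω hω).2 hx hz hxz ha hb hab
    simp only [smul_eq_mul] at this
    simp only [gap]
    linarith
  have hint_ax := (hint x hx).const_mul a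
  have hint_bz := (hint z hz).const_mul b
  have hgap_integral_pos : 0 < ∫ ω, gap ω ∂μ :=
    (integral_pos_iff_support_of_nonneg hgap_nonneg ((hint_ax.add hint_bz).sub (hint _ hmem))).2
      (hA.trans_le (measure_mono fun ω hω => (hgap_pos ω hω).ne'))
  rw [integral_sub (by exact hint_ax.add hint_bz) (hint _ hmem), integral_add hint_ax hint_bz,
    integral_const_mul, integral_const_mul] at hgap_integral_pos
  simp only [smul_eq_mul]
  linarith

section Minimum

variable {f : ℝ → ℝ} {s : Set ℝ} {a : ℝ}

theorem StrictConvexOn.lt_of_isMinOn (hf : StrictConvexOn ℝ s f) (hmin : IsMinOn f s a)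
    (ha : a ∈ s) {x : ℝ} (hx : x ∈ s) (hxa : x ≠ a) : f a < f x :=
  (hmin hx).lt_of_ne fun h =>
    hxa (hf.eq_of_isMinOn (fun _ hz => h ▸ hmin hz) hmin hx ha)

theorem StrictConvexOn.strictAntiOn_of_isMinOn (hf : StrictConvexOn ℝ s f)
    (hmin : IsMinOn f s a) (ha : a ∈ s) : StrictAntiOn f (s ∩ Iic a) := by
  intro u hu v hv huv
  rcases (mem_Iic.1 hv.2).eq_or_lt with rfl | hva
  · exact hf.lt_of_isMinOn hmin ha hu.1 huv.ne
  · refine hf.convexOn.lt_left_of_right_lt hu.1 ha ?_ (hf.lt_of_isMinOn hmin ha hv.1 hva.ne)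
    rw [openSegment_eq_Ioo (huv.trans hva)]
    exact ⟨huv, hva⟩

theorem StrictConvexOn.strictMonoOn_of_isMinOn (hf : StrictConvexOn ℝ s f)
    (hmin : IsMinOn f s a) (ha : a ∈ s) : StrictMonoOn f (s ∩ Ici a) := by
  intro u hu v hv huv
  rcases (mem_Ici.1 hu.2).eq_or_lt with rfl | hau
  · exact hf.lt_of_isMinOn hmin ha hv.1 huv.ne'
  · refine hf.convexOn.lt_right_of_left_lt ha hv.1 ?_ (hf.lt_of_isMinOn hmin ha hu.1 hau.ne')
    rw [openSegment_eq_Ioo (hau.trans huv)]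
    exact ⟨hau, huv⟩

theorem ContinuousOn.exists_isMinOn_Ioc {b : ℝ} (hab : a < b) (hf : ContinuousOn f (Ioc a b))
    (hlim : Tendsto f (𝓝[>] a) atTop) : ∃ c ∈ Ioc a b, IsMinOn f (Ioc a b) c := by
  obtain ⟨u, hau, hu⟩ := mem_nhdsGT_iff_exists_Ioo_subset.1 (hlim.eventually_gt_atTop (f b))
  obtain ⟨d, had, hdb⟩ := exists_between (lt_min hau hab)
  have hsub : Icc d b ⊆ Ioc a b := Icc_subset_Ioc had le_rfl
  obtain ⟨c, hc, hcmin⟩ := isCompact_Icc.exists_isMinOn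
    (nonempty_Icc.2 (hdb.trans_le (min_le_right _ _)).le) (hf.mono hsub)
  refine ⟨c, hsub hc, fun x hx => ?_⟩
  rcases lt_or_ge x d with hxd | hdx
  · exact (hcmin ⟨(hdb.trans_le (min_le_right _ _)).le, le_rfl⟩).trans
      (show f b < f x from hu ⟨hx.1, hxd.trans (hdb.trans_le (min_le_left _ _))⟩).le
  · exact hcmin ⟨hdx, hx.2⟩

theorem StrictConvexOn.strictAntiOn_Ioo_or_exists_isMinOn {b : ℝ} (hab : a < b)
    (hf : StrictConvexOn ℝ (Ioc a b) f) (hcont : ContinuousOn f (Ioc a b))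
    (hlim : Tendsto f (𝓝[>] a) atTop) :
    StrictAntiOn f (Ioo a b) ∨
      ∃ c : ℝ, a < c ∧ c < b ∧
        (∀ x ∈ Ioc a b, x ≠ c → f c < f x) ∧
        StrictAntiOn f (Ioo a c) ∧ StrictMonoOn f (Ioo c b) := by
  obtain ⟨c, hc, hmin⟩ := hcont.exists_isMinOn_Ioc hab hlim
  rcases hc.2.eq_or_lt with rfl | hcb
  · exact .inl <| (hf.strictAntiOn_of_isMinOn hmin hc).mono fun x hx =>
      ⟨Ioo_subset_Ioc_self hx, hx.2.le⟩
  · refine .inr ⟨c, hc.1, hcb, fun x hx hxc => hf.lt_of_isMinOn hmin hc hx hxc,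
      (hf.strictAntiOn_of_isMinOn hmin hc).mono fun x hx => ⟨⟨hx.1, hx.2.le.trans hc.2⟩, hx.2.le⟩,
      (hf.strictMonoOn_of_isMinOn hmin hc).mono fun x hx => ⟨⟨hc.1.trans hx.1, hx.2.le⟩, hx.1.le⟩⟩

end Minimum

theorem tendsto_lintegral_nhds_top_of_tendsto {α ι : Type*} [MeasurableSpace α] {μ : Measure α}
    {u : Filter ι} [u.IsCountablyGenerated] {f : ι → α → ENNReal}
    (hf : ∀ i, AEMeasurable (f i) μ) {A : Set α} (hA : MeasurableSet A) (hμA : μ A ≠ 0)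
    (hlim : ∀ ω ∈ A, Tendsto (fun i => f i ω) u (𝓝 ⊤)) :
    Tendsto (fun i => ∫⁻ ω, f i ω ∂μ) u (𝓝 ⊤) := by
  rcases u.eq_or_neBot with rfl | hu
  · exact tendsto_bot
  have hliminf : ∫⁻ ω, liminf (fun i => f i ω) u ∂μ = ⊤ := by
    refine eq_top_iff.2 (calc
      ⊤ = ∫⁻ ω, A.indicator (fun _ => ⊤) ω ∂μ := by
        rw [lintegral_indicator_const hA, ENNReal.top_mul hμA]
      _ ≤ _ := lintegral_mono fun ω => ?_)
    by_cases hω : ω ∈ A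
    · simp [hω, (hlim ω hω).liminf_eq]
    · simp [hω]
  have hfatou := lintegral_liminf_le' (u := u) hf
  rw [hliminf, top_le_iff] at hfatou
  exact tendsto_of_le_liminf_of_limsup_le hfatou.ge le_top

section gfun

variable {Ω : Type*} [MeasurableSpace Ω] {μ : Measure Ω} {X : Ω → ℝ} {L : ℕ} {y : Fin L → ℝ}

theorem sum_exp_mul_pos (i : Fin L) (t : ℝ) : 0 < ∑ j, exp (y j * t) :=
  Finset.sum_pos (fun _ _ => exp_pos _) ⟨i, Finset.mem_univ i⟩

theorem norm_mul_exp_div_sum_exp_le {t x : ℝ} (i : Fin L) (ht : 0 ≤ t) (hx : x ≤ y i) :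
    ‖t * exp (x * t) / ∑ j, exp (y j * t)‖ ≤ t := by
  have hD := sum_exp_mul_pos (y := y) i t
  rw [Real.norm_of_nonneg (by positivity), div_le_iff₀ hD]
  refine mul_le_mul_of_nonneg_left ((exp_le_exp.2 (mul_le_mul_of_nonneg_right hx ht)).trans ?_) ht
  exact Finset.single_le_sum (f := fun j => exp (y j * t)) (fun _ _ => (exp_pos _).le)
    (Finset.mem_univ i)

theorem integrable_gfun_integrand (hXmeas : Measurable X) (hXnn : ∀ ω, 0 ≤ X ω)
    (hXint : Integrable X μ) {x : ℝ} (i : Fin L) (hx : x ≤ y i) :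
    Integrable (fun ω => X ω * exp (x * X ω) / ∑ j, exp (y j * X ω)) μ :=
  hXint.mono' (by fun_prop : Measurable _).aestronglyMeasurable
    (ae_of_all _ fun ω => norm_mul_exp_div_sum_exp_le i (hXnn ω) hx)

theorem one_div_mul_gfun_integrand (t x D : ℝ) :
    1 / x * (t * exp (x * t) / D) = t / D * (exp (t * x) / x) := by
  rw [mul_comm x]
  ring

theorem gfun_eq_integral (x : ℝ) :
    gfun μ X L y x = ∫ ω, (X ω / ∑ j, exp (y j * X ω)) * (exp (X ω * x) / x) ∂μ := by
  simp only [gfun, ← integral_const_mul, one_div_mul_gfun_integrand]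

theorem strictConvexOn_gfun (hXmeas : Measurable X) (hXnn : ∀ ω, 0 ≤ X ω)
    (hXint : Integrable X μ) (hXpos : 0 < μ {ω | 0 < X ω}) (i : Fin L) :
    StrictConvexOn ℝ (Ioc 0 (y i)) (gfun μ X L y) := by
  have hφ (c : ℝ) : StrictConvexOn ℝ (Ioc 0 (y i)) fun x => exp (c * x) / x :=
    (strictConvexOn_exp_mul_div c).subset Ioc_subset_Ioi_self (convex_Ioc _ _)
  rw [show gfun μ X L y = _ from funext gfun_eq_integral]
  refine StrictConvexOn.integral (fun x hx => ?_) (fun ω => ?_) hXpos fun ω hω =>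
    (hφ (X ω)).const_mul (div_pos hω (sum_exp_mul_pos i _))
  · refine ((integrable_gfun_integrand hXmeas hXnn hXint i hx.2).const_mul (1 / x)).congr
      (ae_of_all _ fun ω => ?_)
    exact one_div_mul_gfun_integrand _ _ _
  · exact ConvexOn.smul (div_nonneg (hXnn ω) (sum_exp_mul_pos i _).le) (hφ (X ω)).convexOn

theorem continuousOn_gfun (hXmeas : Measurable X) (hXnn : ∀ ω, 0 ≤ X ω)
    (hXint : Integrable X μ) (i : Fin L) :
    ContinuousOn (gfun μ X L y) (Ioc 0 (y i)) := by
  have hint : ContinuousOn (fun x => ∫ ω, X ω * exp (x * X ω) / ∑ j, exp (y j * X ω) ∂μ)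
      (Iic (y i)) :=
    continuousOn_of_dominated (fun x _ => (by fun_prop : Measurable _).aestronglyMeasurable)
      (fun x hx => ae_of_all _ fun ω => norm_mul_exp_div_sum_exp_le i (hXnn ω) hx) hXint
      (ae_of_all _ fun ω => by fun_prop)
  exact (continuousOn_const.div continuousOn_id fun x hx => hx.1.ne').mul
    (hint.mono Ioc_subset_Iic_self)

theorem tendsto_gfun_nhdsGT_zero (hXmeas : Measurable X) (hXnn : ∀ ω, 0 ≤ X ω)
    (hXint : Integrable X μ) (hXpos : 0 < μ {ω | 0 < X ω}) {i : Fin L} (hi : 0 < y i) :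
    Tendsto (gfun μ X L y) (𝓝[>] 0) atTop := by
  have hint (x : ℝ) (hx : x ≤ y i) := integrable_gfun_integrand (μ := μ) hXmeas hXnn hXint i hx
  have hpos : 0 < ∫ ω, X ω * exp (0 * X ω) / ∑ j, exp (y j * X ω) ∂μ := by
    refine (integral_pos_iff_support_of_nonneg (fun ω => ?_) (hint 0 hi.le)).2
      (hXpos.trans_le (measure_mono fun ω (hω : 0 < X ω) => ?_))
    · have := hXnn ω
      exact div_nonneg (by positivity) (sum_exp_mul_pos i _).le
    · exact (div_pos (mul_pos hω (exp_pos _)) (sum_exp_mul_pos i _)).ne'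
  refine tendsto_atTop_mono' _ ?_ (tendsto_inv_nhdsGT_zero.const_mul_atTop hpos)
  filter_upwards [Ioo_mem_nhdsGT hi] with x hx
  have hmono : ∫ ω, X ω * exp (0 * X ω) / ∑ j, exp (y j * X ω) ∂μ
      ≤ ∫ ω, X ω * exp (x * X ω) / ∑ j, exp (y j * X ω) ∂μ :=
    integral_mono (hint 0 hi.le) (hint x hx.2.le) fun ω =>
      div_le_div_of_nonneg_right (mul_le_mul_of_nonneg_left
        (exp_le_exp.2 (mul_le_mul_of_nonneg_right hx.1.le (hXnn ω))) (hXnn ω))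
        (sum_exp_mul_pos i _).le
  rw [gfun, one_div, mul_comm _ x⁻¹]
  exact mul_le_mul_of_nonneg_left hmono (inv_nonneg.2 hx.1.le)

theorem tendsto_ofReal_one_div_mul_lintegral_atTop (hXmeas : Measurable X)
    (hXpos : 0 < μ {ω | 0 < X ω}) (i : Fin L) :
    Tendsto (fun x : ℝ => ENNReal.ofReal (1 / x) *
      ∫⁻ ω, ENNReal.ofReal (X ω * exp (x * X ω) / ∑ j, exp (y j * X ω)) ∂μ) atTop (𝓝 ⊤) := by
  have hlim (ω : Ω) (hω : 0 < X ω) :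
      Tendsto (fun x => (X ω / ∑ j, exp (y j * X ω)) * (exp (X ω * x) / x)) atTop atTop := by
    simpa using (tendsto_exp_mul_div_rpow_atTop 1 (X ω) hω).const_mul_atTop
      (div_pos hω (sum_exp_mul_pos (y := y) i _))
  refine (tendsto_lintegral_nhds_top_of_tendsto (fun x => by fun_prop)
    (measurableSet_lt measurable_const hXmeas) hXpos.ne'
    fun ω hω => ENNReal.tendsto_ofReal_atTop.comp (hlim ω hω)).congr' ?_
  filter_upwards [eventually_gt_atTop 0] with x hx
  rw [← lintegral_const_mul' _ _ ENNReal.ofReal_ne_top]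
  refine lintegral_congr fun ω => ?_
  rw [Function.comp_apply, ← ENNReal.ofReal_mul (by positivity), one_div_mul_gfun_integrand]

end gfun

theorem gfun_convexity_general
    {Ω : Type*} [MeasurableSpace Ω] (μ : Measure Ω)
    (X : Ω → ℝ) (hXmeas : Measurable X) (hXnn : ∀ ω, 0 ≤ X ω)
    (hXint : Integrable X μ) (hXpos : 0 < μ {ω | 0 < X ω})
    (L : ℕ) (y : Fin L → ℝ)
    (ymax : ℝ) (hymax_mem : ∃ i, y i = ymax)
    (hymax_pos : 0 < ymax) :
    ConvexOn ℝ (Ioc 0 ymax) (gfun μ X L y) ∧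
    ContinuousOn (gfun μ X L y) (Ioc 0 ymax) ∧
    (StrictAntiOn (gfun μ X L y) (Ioo 0 ymax) ∨
      ∃ xs : ℝ, 0 < xs ∧ xs < ymax ∧
        (∀ x ∈ Ioc (0 : ℝ) ymax, x ≠ xs → gfun μ X L y xs < gfun μ X L y x) ∧
        StrictAntiOn (gfun μ X L y) (Ioo 0 xs) ∧
        StrictMonoOn (gfun μ X L y) (Ioo xs ymax)) ∧
    Tendsto (gfun μ X L y) (𝓝[>] 0) atTop ∧
    Tendsto (fun x : ℝ =>
        ENNReal.ofReal (1 / x) *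
          ∫⁻ ω, ENNReal.ofReal
            (X ω * Real.exp (x * X ω) / ∑ j : Fin L, Real.exp (y j * X ω)) ∂μ)
      atTop (𝓝 (⊤ : ENNReal)) := by
  obtain ⟨i, rfl⟩ := hymax_mem
  have hconv : StrictConvexOn ℝ (Ioc 0 (y i)) (gfun μ X L y) :=
    strictConvexOn_gfun hXmeas hXnn hXint hXpos i
  have hcont : ContinuousOn (gfun μ X L y) (Ioc 0 (y i)) := continuousOn_gfun hXmeas hXnn hXint i
  have hblow := tendsto_gfun_nhdsGT_zero hXmeas hXnn hXint hXpos hymax_pos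
  exact ⟨hconv.convexOn, hcont, hconv.strictAntiOn_Ioo_or_exists_isMinOn hymax_pos hcont hblow,
    hblow, tendsto_ofReal_one_div_mul_lintegral_atTop hXmeas hXpos i⟩

/-- **A useful convexity property.** -/
theorem gfun_convexity
    {Ω : Type*} [MeasurableSpace Ω] (μ : Measure Ω) [IsProbabilityMeasure μ]
    (X : Ω → ℝ) (hXmeas : Measurable X) (hXnn : ∀ ω, 0 ≤ X ω)
    (hXint : Integrable X μ) (hXpos : 0 < μ {ω | 0 < X ω})
    (L : ℕ) (hL : 0 < L) (y : Fin L → ℝ) (hynn : ∀ i, 0 ≤ y i)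
    (ymax : ℝ) (hymax_mem : ∃ i, y i = ymax) (hymax_ub : ∀ i, y i ≤ ymax)
    (hymax_pos : 0 < ymax) :
    ConvexOn ℝ (Ioc 0 ymax) (gfun μ X L y) ∧
    ContinuousOn (gfun μ X L y) (Ioc 0 ymax) ∧
    (StrictAntiOn (gfun μ X L y) (Ioo 0 ymax) ∨
      ∃ xs : ℝ, 0 < xs ∧ xs < ymax ∧
        (∀ x ∈ Ioc (0 : ℝ) ymax, x ≠ xs → gfun μ X L y xs < gfun μ X L y x) ∧
        StrictAntiOn (gfun μ X L y) (Ioo 0 xs) ∧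
        StrictMonoOn (gfun μ X L y) (Ioo xs ymax)) ∧
    Tendsto (gfun μ X L y) (𝓝[>] 0) atTop ∧
    Tendsto (fun x : ℝ =>
        ENNReal.ofReal (1 / x) *
          ∫⁻ ω, ENNReal.ofReal
            (X ω * Real.exp (x * X ω) / ∑ j : Fin L, Real.exp (y j * X ω)) ∂μ)
      atTop (𝓝 (⊤ : ENNReal)) :=
  gfun_convexity_general μ X hXmeas hXnn hXint hXpos L y ymax hymax_mem hymax_pos
end

section
/- Let W be a nonnegative real random variable with 0<E[W]<∞ and E[W²]=∞, let q≥2 be an integer, fix β>0 and write β'=e^β−1. Define p_{β,0}(s)=E[log(e^{β'Ws}+q−1)] − (β'·E[W]/(2q))·[(q−1)s²+2s−1] for s∈[0,1]. Then every maximizer s of p_{β,0} over [0,1] satisfies s>0; in fact there exists ε>0 (depending on β, q and the law of W) such that every maximizer satisfies s>ε. -/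
open MeasureTheory Filter Topology Set

/-- The reduced one-dimensional pressure functional at zero field:
`p_{β,0}(s) = E[log(e^{β'Ws}+q−1)] − (β'E[W]/(2q))·[(q−1)s²+2s−1]`, `β' = e^β−1`. -/
noncomputable def pfun {Ω : Type*} [MeasurableSpace Ω] (μ : Measure Ω)
    (W : Ω → ℝ) (q : ℕ) (β : ℝ) (s : ℝ) : ℝ :=
  (∫ ω, Real.log (Real.exp ((Real.exp β - 1) * W ω * s) + q - 1) ∂μ)
    - (Real.exp β - 1) * (∫ ω, W ω ∂μ) / (2 * q) * ((q - 1) * s ^ 2 + 2 * s - 1)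

open Real

/-! Write `b = e^β - 1` and `φ(x) = log (e^x + q - 1) - log q - x / q` for the gap between
`x ↦ log (e^x + q - 1)` and its tangent line at `0`. Then
`p(t) - p(0) = E[φ(b W t)] - b E[W] (q - 1) t² / (2q)`. Since `φ(x) ≥ c_q min(x, 1)²`, the
choice `t = 1 / (b n + 1)` gives `E[φ(b W t)] ≥ c_q b² t² E[min(W, n)²]`, and
`E[min(W, n)²] → E[W²] = ∞` by monotone convergence.
Hence `p(t) > p(0)` for some `t ∈ (0, 1]`; by continuity of `p` this persists on a
neighbourhood of `0`, which therefore contains no maximizer. -/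

noncomputable def logPartitionGap (q x : ℝ) : ℝ :=
  log (exp x + q - 1) - log q - x / q

section LogPartitionGap

variable {q : ℝ}

lemma abs_log_exp_add_sub_one_le (hq : 1 ≤ q) (x : ℝ) :
    |log (exp x + q - 1)| ≤ |x| + log q := by
  have hlog_q : 0 ≤ log q := log_nonneg hq
  have hpos : 0 < exp x + q - 1 := by linarith [exp_pos x]
  have hlower : x ≤ log (exp x + q - 1) := by
    rw [le_log_iff_exp_le hpos]; linarith
  have hupper : log (exp x + q - 1) ≤ |x| + log q := by
    have h1 : 1 ≤ exp |x| := one_le_exp (abs_nonneg x)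
    have h2 : exp x ≤ exp |x| := exp_le_exp.2 (le_abs_self x)
    rw [← log_exp |x|, ← log_mul (exp_ne_zero _) (by positivity)]
    exact log_le_log hpos (by nlinarith)
  rw [abs_le]
  constructor <;> linarith [neg_abs_le x]

lemma logPartitionGap_zero : logPartitionGap q 0 = 0 := by
  simp [logPartitionGap]

lemma hasDerivAt_logPartitionGap (hq : 1 ≤ q) (x : ℝ) :
    HasDerivAt (logPartitionGap q) ((q - 1) * (exp x - 1) / (q * (exp x + q - 1))) x := by
  have hpos : 0 < exp x + q - 1 := by linarith [exp_pos x]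
  have hq₀ : q ≠ 0 := by positivity
  refine (((((hasDerivAt_exp x).add_const q).sub_const 1).log hpos.ne').sub_const (log q)
    |>.sub ((hasDerivAt_id x).div_const q)).congr_deriv ?_
  field_simp
  ring

lemma monotoneOn_logPartitionGap (hq : 1 ≤ q) : MonotoneOn (logPartitionGap q) (Ici 0) := by
  refine monotoneOn_of_hasDerivWithinAt_nonneg (convex_Ici 0)
    (fun x _ ↦ (hasDerivAt_logPartitionGap hq x).continuousAt.continuousWithinAt)
    (fun x _ ↦ (hasDerivAt_logPartitionGap hq x).hasDerivWithinAt) fun x hx ↦ ?_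
  rw [interior_Ici] at hx
  have := one_le_exp (le_of_lt hx)
  exact div_nonneg (mul_nonneg (by linarith) (by linarith)) (by nlinarith)

lemma mul_sq_le_logPartitionGap (hq : 1 ≤ q) {x : ℝ} (hx₀ : 0 ≤ x) (hx₁ : x ≤ 1) :
    (q - 1) / (2 * q * (q + 2)) * x ^ 2 ≤ logPartitionGap q x := by
  -- `c` comes from `exp y - 1 ≥ y` and `exp y + q - 1 ≤ q + 2` on `[0, 1]`
  set c := (q - 1) / (2 * q * (q + 2))
  have hmono : MonotoneOn (fun y ↦ logPartitionGap q y - c * y ^ 2) (Icc 0 1) := by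
    refine monotoneOn_of_hasDerivWithinAt_nonneg (convex_Icc 0 1)
      (f' := fun y ↦ (q - 1) * (exp y - 1) / (q * (exp y + q - 1)) - c * (2 * y))
      (fun y _ ↦ ((hasDerivAt_logPartitionGap hq y).sub
        ((hasDerivAt_pow 2 y).const_mul c)).continuousAt.continuousWithinAt)
      (fun y _ ↦ ((hasDerivAt_logPartitionGap hq y).sub
        ((hasDerivAt_pow 2 y).const_mul c)).hasDerivWithinAt.congr_deriv (by push_cast; ring))
      fun y hy ↦ ?_
    rw [interior_Icc] at hy
    have hexp : exp y + q - 1 ≤ q + 2 := by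
      linarith [exp_le_exp.2 hy.2.le, exp_one_lt_d9]
    have hq₀ : 0 < q := by linarith
    rw [sub_nonneg]
    calc c * (2 * y) = (q - 1) * y / (q * (q + 2)) := by
          simp only [c]; field_simp
      _ ≤ (q - 1) * (exp y - 1) / (q * (exp y + q - 1)) := by
          refine div_le_div₀ (mul_nonneg (by linarith) (by linarith [add_one_le_exp y, hy.1]))
            (mul_le_mul_of_nonneg_left (by linarith [add_one_le_exp y]) (by linarith))
            (mul_pos hq₀ (by linarith [one_le_exp hy.1.le])) (by gcongr)
  simpa [logPartitionGap_zero] using hmono ⟨le_rfl, zero_le_one⟩ ⟨hx₀, hx₁⟩ hx₀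

lemma mul_min_one_sq_le_logPartitionGap (hq : 1 ≤ q) {x : ℝ} (hx : 0 ≤ x) :
    (q - 1) / (2 * q * (q + 2)) * min x 1 ^ 2 ≤ logPartitionGap q x :=
  (mul_sq_le_logPartitionGap hq (le_min hx zero_le_one) (min_le_right x 1)).trans
    (monotoneOn_logPartitionGap hq (le_min hx zero_le_one) hx (min_le_left x 1))

end LogPartitionGap

lemma exists_pos_lt_dist_of_isMaxOn {α β : Type*} [PseudoMetricSpace α] [TopologicalSpace β]
    [LinearOrder β] [ClosedIciTopology β] {f : α → β} {S : Set α} {a t : α}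
    (hf : ContinuousWithinAt f S a) (ht : t ∈ S) (hlt : f a < f t) :
    ∃ ε > 0, ∀ s ∈ S, IsMaxOn f S s → ε < dist s a := by
  obtain ⟨δ, hδ, hball⟩ := Metric.mem_nhdsWithin_iff.1 (hf.eventually_lt_const hlt)
  refine ⟨δ / 2, half_pos hδ, fun s hs hmax ↦ ?_⟩
  by_contra! hsa
  exact (hball ⟨Metric.mem_ball.2 (by linarith), hs⟩).not_ge (isMaxOn_iff.1 hmax t ht)

section Integration

variable {Ω : Type*} [MeasurableSpace Ω] {μ : Measure Ω} {X : Ω → ℝ} {q : ℝ}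

lemma integrable_log_exp_add_sub_one [IsFiniteMeasure μ] (hX : Integrable X μ) (hq : 1 ≤ q) :
    Integrable (fun ω ↦ log (exp (X ω) + q - 1)) μ := by
  refine (hX.abs.add (integrable_const (log q))).mono' ?_ (ae_of_all _ fun ω ↦ ?_)
  · exact (measurable_log.comp_aemeasurable (((measurable_exp.comp_aemeasurable
      hX.aemeasurable).add_const _).sub_const _)).aestronglyMeasurable
  · exact abs_log_exp_add_sub_one_le hq (X ω)

lemma integrable_logPartitionGap [IsFiniteMeasure μ] (hX : Integrable X μ) (hq : 1 ≤ q) :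
    Integrable (fun ω ↦ logPartitionGap q (X ω)) μ :=
  ((integrable_log_exp_add_sub_one hX hq).sub (integrable_const _)).sub (hX.div_const q)

lemma integral_logPartitionGap [IsProbabilityMeasure μ] (hX : Integrable X μ) (hq : 1 ≤ q) :
    ∫ ω, logPartitionGap q (X ω) ∂μ =
      ∫ ω, log (exp (X ω) + q - 1) ∂μ - log q - (∫ ω, X ω ∂μ) / q := by
  have hlog := integrable_log_exp_add_sub_one hX hq
  have hlog_sub : Integrable (fun ω ↦ log (exp (X ω) + q - 1) - log q) μ :=
    hlog.sub (integrable_const _)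
  simp only [logPartitionGap]
  rw [integral_sub hlog_sub (hX.div_const q), integral_sub hlog (integrable_const _),
    integral_div, integral_const, probReal_univ, one_smul]

lemma continuous_integral_log_exp_mul_add_sub_one [IsFiniteMeasure μ] (hX : Integrable X μ)
    (hq : 1 ≤ q) :
    Continuous fun s ↦ ∫ ω, log (exp (X ω * s) + q - 1) ∂μ := by
  refine continuous_iff_continuousAt.2 fun s₀ ↦ continuousAt_of_dominated
    (bound := fun ω ↦ |X ω| * (|s₀| + 1) + log q)
    (Eventually.of_forall fun s ↦
      (integrable_log_exp_add_sub_one (hX.mul_const s) hq).aestronglyMeasurable) ?_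
    ((hX.abs.mul_const _).add (integrable_const _)) (ae_of_all _ fun ω ↦ ?_)
  · filter_upwards [Metric.ball_mem_nhds s₀ one_pos] with s hs
    refine ae_of_all _ fun ω ↦ (abs_log_exp_add_sub_one_le hq _).trans ?_
    have : |s| ≤ |s₀| + 1 := by
      have := abs_sub_abs_le_abs_sub s s₀
      rw [Metric.mem_ball, Real.dist_eq] at hs
      linarith
    rw [abs_mul]
    gcongr
  · refine Continuous.continuousAt (Continuous.log (by fun_prop) fun s ↦ ?_)
    linarith [exp_pos (X ω * s), show (1 : ℝ) ≤ q from hq]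

lemma exists_lt_integral_min_abs_sq [IsFiniteMeasure μ] (hX : AEMeasurable X μ)
    (hX2 : ¬ Integrable (fun ω ↦ X ω ^ 2) μ) (B : ℝ) :
    ∃ n : ℕ, B < ∫ ω, min |X ω| n ^ 2 ∂μ := by
  by_contra! h
  apply hX2
  have htrunc_meas : ∀ n : ℕ, AEMeasurable (fun ω ↦ min |X ω| n ^ 2) μ := fun n ↦
    ((hX.abs.min aemeasurable_const).pow_const 2)
  have htrunc_int : ∀ n : ℕ, Integrable (fun ω ↦ min |X ω| n ^ 2) μ := fun n ↦
    Integrable.of_bound (htrunc_meas n).aestronglyMeasurable ((n : ℝ) ^ 2)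
      (ae_of_all _ fun ω ↦ by
        rw [Real.norm_eq_abs, abs_of_nonneg (sq_nonneg _)]
        exact pow_le_pow_left₀ (le_min (abs_nonneg _) n.cast_nonneg) (min_le_right _ _) 2)
  have hmct : Tendsto (fun n : ℕ ↦ ∫⁻ ω, ENNReal.ofReal (min |X ω| n ^ 2) ∂μ) atTop
      (𝓝 (∫⁻ ω, ENNReal.ofReal (X ω ^ 2) ∂μ)) := by
    refine lintegral_tendsto_of_tendsto_of_monotone (fun n ↦ (htrunc_meas n).ennreal_ofReal)
      (ae_of_all _ fun ω n m hnm ↦ ?_) (ae_of_all _ fun ω ↦ ?_)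
    · exact ENNReal.ofReal_le_ofReal (pow_le_pow_left₀ (le_min (abs_nonneg _) n.cast_nonneg)
        (min_le_min_left _ (Nat.cast_le.2 hnm)) 2)
    · obtain ⟨n₀, hn₀⟩ := exists_nat_ge |X ω|
      refine tendsto_atTop_of_eventually_const (i₀ := n₀) fun n hn ↦ ?_
      rw [min_eq_left (hn₀.trans (Nat.cast_le.2 hn)), sq_abs]
  refine ⟨(hX.pow_const 2).aestronglyMeasurable, ?_⟩
  rw [hasFiniteIntegral_iff_ofReal (ae_of_all _ fun ω ↦ sq_nonneg _)]
  refine (le_of_tendsto' hmct fun n ↦ ?_ : _ ≤ ENNReal.ofReal B).trans_lt ENNReal.ofReal_lt_top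
  rw [← ofReal_integral_eq_lintegral_ofReal (htrunc_int n) (ae_of_all _ fun ω ↦ sq_nonneg _)]
  exact ENNReal.ofReal_le_ofReal (h n)

end Integration

section Pressure

variable {Ω : Type*} [MeasurableSpace Ω] {μ : Measure Ω} {W : Ω → ℝ}

lemma exists_lt_integral_logPartitionGap [IsFiniteMeasure μ] (hW : Integrable W μ)
    (hW₀ : 0 ≤ W) (hW2 : ¬ Integrable (fun ω ↦ W ω ^ 2) μ) {q : ℝ} (hq : 1 < q)
    {b : ℝ} (hb : 0 < b) (C : ℝ) :
    ∃ t ∈ Ioc (0 : ℝ) 1, C * t ^ 2 < ∫ ω, logPartitionGap q (b * W ω * t) ∂μ := by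
  set c := (q - 1) / (2 * q * (q + 2))
  have hc : 0 < c := by
    have : 0 < q - 1 := by linarith
    positivity
  obtain ⟨n, hn⟩ := exists_lt_integral_min_abs_sq hW.aemeasurable hW2 (C / (c * b ^ 2))
  set t := (b * n + 1)⁻¹
  have ht₀ : 0 < t := by positivity
  have hbnt : b * n * t ≤ 1 := by
    rw [← div_eq_mul_inv, div_le_one (by positivity)]
    linarith
  have ht₁ : t ≤ 1 := inv_le_one_of_one_le₀ (by nlinarith [n.cast_nonneg (α := ℝ)])
  refine ⟨t, ⟨ht₀, ht₁⟩, ?_⟩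
  have hpointwise :
      ∀ ω, c * (b * t) ^ 2 * min |W ω| n ^ 2 ≤ logPartitionGap q (b * W ω * t) := by
    intro ω
    have hWω := hW₀ ω
    have hmin : b * t * min |W ω| n ≤ min (b * W ω * t) 1 := by
      rw [abs_of_nonneg hWω]
      refine le_min ?_ ?_
      · nlinarith [min_le_left (W ω) n, mul_pos hb ht₀]
      · nlinarith [min_le_right (W ω) n, mul_pos hb ht₀]
    calc c * (b * t) ^ 2 * min |W ω| n ^ 2 = c * (b * t * min |W ω| n) ^ 2 := by ring
      _ ≤ c * min (b * W ω * t) 1 ^ 2 := by gcongr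
      _ ≤ logPartitionGap q (b * W ω * t) :=
          mul_min_one_sq_le_logPartitionGap hq.le (mul_nonneg (mul_nonneg hb.le hWω) ht₀.le)
  calc C * t ^ 2 = c * (b * t) ^ 2 * (C / (c * b ^ 2)) := by field_simp
    _ < c * (b * t) ^ 2 * ∫ ω, min |W ω| n ^ 2 ∂μ := by gcongr
    _ = ∫ ω, c * (b * t) ^ 2 * min |W ω| n ^ 2 ∂μ := (integral_const_mul _ _).symm
    _ ≤ ∫ ω, logPartitionGap q (b * W ω * t) ∂μ :=
        integral_mono_of_nonneg (ae_of_all _ fun ω ↦ by positivity)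
          (integrable_logPartitionGap ((hW.const_mul b).mul_const t) hq.le)
          (ae_of_all _ hpointwise)

variable {q : ℕ}

lemma pfun_sub_pfun_zero [IsProbabilityMeasure μ] (hW : Integrable W μ) (hq : 1 ≤ q)
    (β s : ℝ) :
    pfun μ W q β s - pfun μ W q β 0 =
      ∫ ω, logPartitionGap q ((exp β - 1) * W ω * s) ∂μ
        - (exp β - 1) * (∫ ω, W ω ∂μ) * (q - 1) / (2 * q) * s ^ 2 := by
  have hX := (hW.const_mul (exp β - 1)).mul_const s
  have hq₀ : (q : ℝ) ≠ 0 := by positivity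
  have hpfun_zero : pfun μ W q β 0 = log q + (exp β - 1) * (∫ ω, W ω ∂μ) / (2 * q) := by
    simp [pfun]
  rw [hpfun_zero, integral_logPartitionGap hX (by exact_mod_cast hq), integral_mul_const,
    integral_const_mul, pfun]
  set L := ∫ ω, log (exp ((exp β - 1) * W ω * s) + q - 1) ∂μ
  field_simp
  ring

lemma continuous_pfun [IsFiniteMeasure μ] (hW : Integrable W μ) (hq : 1 ≤ q) (β : ℝ) :
    Continuous (pfun μ W q β) := by
  have := continuous_integral_log_exp_mul_add_sub_one (hW.const_mul (exp β - 1))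
    (q := q) (by exact_mod_cast hq)
  unfold pfun
  fun_prop

end Pressure

theorem spontaneous_magnetization_general
    {Ω : Type*} [MeasurableSpace Ω] (μ : Measure Ω) [IsProbabilityMeasure μ]
    (W : Ω → ℝ) (hWnn : ∀ ω, 0 ≤ W ω)
    (hWint : Integrable W μ)
    (hW2 : ¬ Integrable (fun ω => (W ω) ^ 2) μ)
    (q : ℕ) (hq : 2 ≤ q) (β : ℝ) (hβ : 0 < β) :
    (∀ s ∈ Icc (0 : ℝ) 1,
      (∀ t ∈ Icc (0 : ℝ) 1, pfun μ W q β t ≤ pfun μ W q β s) → 0 < s) ∧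
    ∃ ε > (0 : ℝ), ∀ s ∈ Icc (0 : ℝ) 1,
      (∀ t ∈ Icc (0 : ℝ) 1, pfun μ W q β t ≤ pfun μ W q β s) → ε < s := by
  have hq₁ : 1 ≤ q := by omega
  obtain ⟨t, ht, hgap⟩ := exists_lt_integral_logPartitionGap hWint hWnn hW2
    (q := q) (by exact_mod_cast hq) (sub_pos.2 (one_lt_exp_iff.2 hβ))
    ((exp β - 1) * (∫ ω, W ω ∂μ) * (q - 1) / (2 * q))
  have hlt : pfun μ W q β 0 < pfun μ W q β t := by
    linarith [pfun_sub_pfun_zero hWint hq₁ β t]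
  obtain ⟨ε, hε, hfar⟩ := exists_pos_lt_dist_of_isMaxOn
    (continuous_pfun hWint hq₁ β).continuousWithinAt (Ioc_subset_Icc_self ht) hlt
  have hmax : ∀ s ∈ Icc (0 : ℝ) 1,
      (∀ t ∈ Icc (0 : ℝ) 1, pfun μ W q β t ≤ pfun μ W q β s) → ε < s := by
    intro s hs hs_max
    simpa [Real.dist_eq, abs_of_nonneg hs.1] using hfar s hs (isMaxOn_iff.2 hs_max)
  exact ⟨fun s hs hs_max ↦ hε.trans (hmax s hs hs_max), ε, hε, hmax⟩

/-- **Spontaneous magnetization for infinite-variance weights**: if `E[W²]=∞`, every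
maximizer of `p_{β,0}` on `[0,1]` is strictly positive, and in fact bounded away
from `0` by some `ε > 0`. -/
theorem spontaneous_magnetization
    {Ω : Type*} [MeasurableSpace Ω] (μ : Measure Ω) [IsProbabilityMeasure μ]
    (W : Ω → ℝ) (hWmeas : Measurable W) (hWnn : ∀ ω, 0 ≤ W ω)
    (hWint : Integrable W μ) (hEW : 0 < ∫ ω, W ω ∂μ)
    (hW2 : ¬ Integrable (fun ω => (W ω) ^ 2) μ)
    (q : ℕ) (hq : 2 ≤ q) (β : ℝ) (hβ : 0 < β) :
    (∀ s ∈ Icc (0 : ℝ) 1,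
      (∀ t ∈ Icc (0 : ℝ) 1, pfun μ W q β t ≤ pfun μ W q β s) → 0 < s) ∧
    ∃ ε > (0 : ℝ), ∀ s ∈ Icc (0 : ℝ) 1,
      (∀ t ∈ Icc (0 : ℝ) 1, pfun μ W q β t ≤ pfun μ W q β s) → ε < s :=
  spontaneous_magnetization_general μ W hWnn hWint hW2 q hq β hβ
end

section
/- Let W be a nonnegative real random variable with 0<E[W]<∞ and E[W²]<∞, let q≥3 be an integer and 0≤B<log(q−1). Define 𝓕_B(t)=E[(W/E[W])·(e^{tW+B}−1)/(e^{tW+B}+q−1)] for t≥0, and assume the zero-crossing condition: there exists t_*(B)>0 suchที that 𝓕_B''(t)>0 for 0<t<t_*(B) and 𝓕_B''(t)<0 for t>t_*(B), and moreover 𝓕_B'(t_*(B)) > 𝓕_B(t_*(B))/t_*(B). Then the equation 𝓕_B(t) = t·𝓕_B'(t) has exactly two solutions t_a(B) and t_b(B) in [0,∞), and these satisfy 0 ≤ t_a(B) < t_*(B) < t_b(B); equivalently, there are exactly two tangent lines to the graph of 𝓕_B passing through the origin, with slopes 𝓕_B'(t_a(B)) and 𝓕_B'(t_b(B)). -/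
/-!
Let `G(t) = 𝓕(t) - t 𝓕'(t)` be the intercept of the tangent line at `t`; the tangents through the
origin are the zeros of `G`. Since `G' = -t 𝓕''`, the zero-crossing condition makes `G` strictly
decreasing on `[0, t_*]` and strictly increasing on `[t_*, ∞)`. Now `G(0) = 𝓕(0) ≥ 0` as `B ≥ 0`,
and steepness is `G(t_*) < 0`. Finally `G` becomes nonnegative again: `𝓕` is bounded by `1` and
concave beyond `t_*`, so `(t - t_*) 𝓕'(t) ≤ 𝓕(t) - 𝓕(t_*) ≤ 1` and
`G(t) ≥ 𝓕(t_*) - t_* 𝓕'(t) ≥ 0` as soon as `t - t_* ≥ t_* / 𝓕(t_*)`.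
The intermediate value theorem then gives exactly one zero on each side of `t_*`.
-/

open MeasureTheory Filter Topology Set

/-- The function `𝓕_B(t) = E[(W/E[W])·(e^{tW+B}−1)/(e^{tW+B}+q−1)]`. -/
noncomputable def Ffun {Ω : Type*} [MeasurableSpace Ω] (μ : Measure Ω)
    (W : Ω → ℝ) (q : ℕ) (B : ℝ) (t : ℝ) : ℝ :=
  ∫ ω, (W ω / (∫ ω', W ω' ∂μ)) * (Real.exp (t * W ω + B) - 1) /
    (Real.exp (t * W ω + B) + q - 1) ∂μ

section TangentIntercept

variable {F : ℝ → ℝ} {s : ℝ}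

noncomputable def tangentIntercept (F : ℝ → ℝ) (t : ℝ) : ℝ := F t - t * deriv F t

lemma tangentIntercept_eq_zero_iff {t : ℝ} : tangentIntercept F t = 0 ↔ F t = t * deriv F t :=
  sub_eq_zero

lemma hasDerivAt_tangentIntercept {t : ℝ} (hF : DifferentiableAt ℝ F t)
    (hF' : DifferentiableAt ℝ (deriv F) t) :
    HasDerivAt (tangentIntercept F) (-(t * deriv (deriv F) t)) t :=
  (hF.hasDerivAt.sub ((hasDerivAt_id t).mul hF'.hasDerivAt)).congr_deriv (by simp)

lemma continuous_tangentIntercept (hF : Differentiable ℝ F) (hF' : Continuous (deriv F)) :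
    Continuous (tangentIntercept F) :=
  hF.continuous.sub (continuous_id.mul hF')

lemma strictAntiOn_tangentIntercept (hF : Differentiable ℝ F) (hF' : Continuous (deriv F))
    (hconvex : ∀ t, 0 < t → t < s → 0 < deriv (deriv F) t) :
    StrictAntiOn (tangentIntercept F) (Icc 0 s) := by
  refine strictAntiOn_of_deriv_neg (convex_Icc 0 s)
    (continuous_tangentIntercept hF hF').continuousOn fun t ht => ?_
  rw [interior_Icc] at ht
  have h := hconvex t ht.1 ht.2
  rw [(hasDerivAt_tangentIntercept (hF t) (differentiableAt_of_deriv_ne_zero h.ne')).deriv]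
  exact neg_neg_of_pos (mul_pos ht.1 h)

lemma strictMonoOn_tangentIntercept (hF : Differentiable ℝ F) (hF' : Continuous (deriv F))
    (hs : 0 ≤ s) (hconcave : ∀ t, s < t → deriv (deriv F) t < 0) :
    StrictMonoOn (tangentIntercept F) (Ici s) := by
  refine strictMonoOn_of_deriv_pos (convex_Ici s)
    (continuous_tangentIntercept hF hF').continuousOn fun t ht => ?_
  rw [interior_Ici] at ht
  have h := hconcave t ht
  rw [(hasDerivAt_tangentIntercept (hF t) (differentiableAt_of_deriv_ne_zero h.ne)).deriv]
  exact neg_pos.mpr (mul_neg_of_pos_of_neg (hs.trans_lt ht) h)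

lemma exists_tangentIntercept_nonneg (hF : Differentiable ℝ F) (hF' : Continuous (deriv F))
    (hs : 0 < s) (hconcave : ∀ t, s < t → deriv (deriv F) t < 0) (hFs : 0 < F s) {M : ℝ}
    (hM : ∀ t, s ≤ t → F t ≤ M) : ∃ T, s < T ∧ 0 ≤ tangentIntercept F T := by
  have hanti : AntitoneOn (deriv F) (Ici s) :=
    (strictAntiOn_of_deriv_neg (convex_Ici s) hF'.continuousOn fun t ht =>
      hconcave t (by rwa [interior_Ici] at ht)).antitoneOn
  have hMpos : 0 < M := hFs.trans_le (hM s le_rfl)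
  -- chosen so that the secant bound `(T - s) F'(T) ≤ M` becomes `s F'(T) ≤ F s`
  set T := s + s * M / F s with hT
  have hsT : s < T := lt_add_of_pos_right s (by positivity)
  have hsecant : deriv F T * (T - s) ≤ F T - F s := by
    refine (convex_Icc s T).mul_sub_le_image_sub_of_le_deriv hF.continuous.continuousOn
      hF.differentiableOn ?_ s (left_mem_Icc.2 hsT.le) T
      (right_mem_Icc.2 hsT.le) hsT.le
    intro x hx
    rw [interior_Icc] at hx
    exact hanti (mem_Ici.2 hx.1.le) (mem_Ici.2 hsT.le) hx.2.le
  have hslope : s * deriv F T ≤ F s := by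
    have h : deriv F T * (s * M / F s) ≤ M := by
      have := hM T hsT.le
      rw [show T - s = s * M / F s by rw [hT]; ring] at hsecant
      linarith
    rw [mul_div_assoc', div_le_iff₀ hFs] at h
    nlinarith
  refine ⟨T, hsT, ?_⟩
  unfold tangentIntercept
  linarith

lemma exists_two_zeros_of_strictAntiOn_of_strictMonoOn {G : ℝ → ℝ} {T : ℝ} (hG : Continuous G)
    (hs : 0 ≤ s) (hanti : StrictAntiOn G (Icc 0 s)) (hmono : StrictMonoOn G (Ici s))
    (hG0 : 0 ≤ G 0) (hGs : G s < 0) (hsT : s < T) (hGT : 0 ≤ G T) :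
    ∃ a b, 0 ≤ a ∧ a < s ∧ s < b ∧ G a = 0 ∧ G b = 0 ∧
      ∀ t, 0 ≤ t → G t = 0 → t = a ∨ t = b := by
  obtain ⟨a, ⟨ha0, has⟩, hGa⟩ :=
    intermediate_value_Icc' hs hG.continuousOn
      (show (0 : ℝ) ∈ Icc (G s) (G 0) from ⟨hGs.le, hG0⟩)
  obtain ⟨b, ⟨hsb, -⟩, hGb⟩ :=
    intermediate_value_Icc hsT.le hG.continuousOn
      (show (0 : ℝ) ∈ Icc (G s) (G T) from ⟨hGs.le, hGT⟩)
  refine ⟨a, b, ha0, has.lt_of_ne ?_, hsb.lt_of_ne ?_, hGa, hGb, fun t ht hGt => ?_⟩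
  · rintro rfl
    exact hGs.ne hGa
  · rintro rfl
    exact hGs.ne hGb
  rcases le_or_gt t s with hts | hst
  · exact .inl (hanti.injOn ⟨ht, hts⟩ ⟨ha0, has⟩ (hGt.trans hGa.symm))
  · exact .inr (hmono.injOn (mem_Ici.2 hst.le) (mem_Ici.2 hsb) (hGt.trans hGb.symm))

theorem exists_two_tangents_through_origin (hF : Differentiable ℝ F)
    (hF' : Continuous (deriv F)) (hs : 0 < s)
    (hconvex : ∀ t, 0 < t → t < s → 0 < deriv (deriv F) t)
    (hconcave : ∀ t, s < t → deriv (deriv F) t < 0) (hsteep : F s / s < deriv F s)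
    (hF0 : 0 ≤ F 0) (hFs : 0 < F s) {M : ℝ} (hM : ∀ t, s ≤ t → F t ≤ M) :
    ∃ ta tb : ℝ, 0 ≤ ta ∧ ta < s ∧ s < tb ∧
      F ta = ta * deriv F ta ∧ F tb = tb * deriv F tb ∧
      ∀ t : ℝ, 0 ≤ t → F t = t * deriv F t → t = ta ∨ t = tb := by
  obtain ⟨T, hsT, hT⟩ := exists_tangentIntercept_nonneg hF hF' hs hconcave hFs hM
  have h0 : 0 ≤ tangentIntercept F 0 := by simpa [tangentIntercept] using hF0
  have hneg : tangentIntercept F s < 0 := by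
    rw [div_lt_iff₀ hs] at hsteep
    unfold tangentIntercept
    linarith
  simpa only [tangentIntercept_eq_zero_iff] using
    exists_two_zeros_of_strictAntiOn_of_strictMonoOn (continuous_tangentIntercept hF hF') hs.le
      (strictAntiOn_tangentIntercept hF hF' hconvex)
      (strictMonoOn_tangentIntercept hF hF' hs.le hconcave) h0 hneg hsT hT

end TangentIntercept

section PottsRatio

variable {q : ℕ}

noncomputable def pottsRatio (q : ℕ) (x : ℝ) : ℝ := (Real.exp x - 1) / (Real.exp x + q - 1)

noncomputable def pottsRatioDeriv (q : ℕ) (x : ℝ) : ℝ :=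
  q * Real.exp x / (Real.exp x + q - 1) ^ 2

lemma pottsRatio_denom_pos (hq : 1 ≤ q) (x : ℝ) : 0 < Real.exp x + q - 1 := by
  have : (1 : ℝ) ≤ q := by exact_mod_cast hq
  linarith [Real.exp_pos x]

lemma pottsRatio_pos (hq : 1 ≤ q) {x : ℝ} (hx : 0 < x) : 0 < pottsRatio q x :=
  div_pos (sub_pos.2 (Real.one_lt_exp_iff.2 hx)) (pottsRatio_denom_pos hq x)

lemma pottsRatio_nonneg (hq : 1 ≤ q) {x : ℝ} (hx : 0 ≤ x) : 0 ≤ pottsRatio q x :=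
  div_nonneg (sub_nonneg.2 (Real.one_le_exp hx)) (pottsRatio_denom_pos hq x).le

lemma abs_pottsRatio_le_one (hq : 2 ≤ q) (x : ℝ) : |pottsRatio q x| ≤ 1 := by
  have hd := pottsRatio_denom_pos (q := q) (by omega) x
  have : (2 : ℝ) ≤ q := by exact_mod_cast hq
  rw [pottsRatio, abs_div, abs_of_pos hd, div_le_one hd, abs_le]
  constructor <;> linarith [Real.exp_pos x]

lemma abs_pottsRatioDeriv_le_one (hq : 2 ≤ q) (x : ℝ) : |pottsRatioDeriv q x| ≤ 1 := by
  have hd := pottsRatio_denom_pos (q := q) (by omega) x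
  have : (2 : ℝ) ≤ q := by exact_mod_cast hq
  have he := Real.exp_pos x
  rw [pottsRatioDeriv, abs_of_nonneg (by positivity), div_le_one (pow_pos hd 2)]
  -- AM-GM: `(e + (q - 1))² ≥ 4 e (q - 1) ≥ q e`
  nlinarith [sq_nonneg (Real.exp x - (q - 1))]

lemma hasDerivAt_pottsRatio (hq : 1 ≤ q) (x : ℝ) :
    HasDerivAt (pottsRatio q) (pottsRatioDeriv q x) x := by
  have hd := pottsRatio_denom_pos hq x
  refine (((Real.hasDerivAt_exp x).sub_const 1).div
    (((Real.hasDerivAt_exp x).add_const _).sub_const 1) hd.ne').congr_deriv ?_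
  rw [pottsRatioDeriv]
  ring

lemma continuous_pottsRatio (hq : 1 ≤ q) : Continuous (pottsRatio q) :=
  continuous_iff_continuousAt.2 fun x => (hasDerivAt_pottsRatio hq x).continuousAt

lemma continuous_pottsRatioDeriv (hq : 1 ≤ q) : Continuous (pottsRatioDeriv q) := by
  unfold pottsRatioDeriv
  exact (continuous_const.mul Real.continuous_exp).div
    (((Real.continuous_exp.add continuous_const).sub continuous_const).pow 2)
    fun x => pow_ne_zero 2 (pottsRatio_denom_pos hq x).ne'

end PottsRatio

section ParametricIntegral

variable {Ω : Type*} [MeasurableSpace Ω] {μ : Measure Ω} {a W : Ω → ℝ} {g g' : ℝ → ℝ}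
  {B C C' : ℝ}

lemma integrable_mul_comp_affine (ha : Integrable a μ) (hW : AEStronglyMeasurable W μ)
    (hg : Continuous g) (hgC : ∀ x, |g x| ≤ C) (t : ℝ) :
    Integrable (fun ω => a ω * g (t * W ω + B)) μ :=
  ha.mul_bdd (hg.comp_aestronglyMeasurable ((hW.const_mul t).add_const B))
    (ae_of_all _ fun _ => hgC _)

lemma continuous_integral_mul_comp_affine (ha : Integrable a μ) (hW : AEStronglyMeasurable W μ)
    (hg : Continuous g) (hgC : ∀ x, |g x| ≤ C) :
    Continuous fun t => ∫ ω, a ω * g (t * W ω + B) ∂μ :=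
  continuous_of_dominated
    (fun t => (integrable_mul_comp_affine ha hW hg hgC t).aestronglyMeasurable)
    (fun t => ae_of_all _ fun ω => by
      rw [Real.norm_eq_abs, abs_mul]
      exact mul_le_mul_of_nonneg_left (hgC _) (abs_nonneg _))
    (ha.abs.mul_const C)
    (ae_of_all _ fun ω => continuous_const.mul
      (hg.comp ((continuous_id.mul continuous_const).add continuous_const)))

lemma hasDerivAt_integral_mul_comp_affine (ha : Integrable a μ)
    (haW : Integrable (fun ω => a ω * W ω) μ) (hW : AEStronglyMeasurable W μ)
    (hg : ∀ x, HasDerivAt g (g' x) x) (hg' : Continuous g') (hgC : ∀ x, |g x| ≤ C)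
    (hg'C : ∀ x, |g' x| ≤ C') (t : ℝ) :
    HasDerivAt (fun t => ∫ ω, a ω * g (t * W ω + B) ∂μ)
      (∫ ω, a ω * W ω * g' (t * W ω + B) ∂μ) t := by
  have hgc : Continuous g := continuous_iff_continuousAt.2 fun x => (hg x).continuousAt
  refine (hasDerivAt_integral_of_dominated_loc_of_deriv_le
    (F := fun t ω => a ω * g (t * W ω + B)) (F' := fun t ω => a ω * W ω * g' (t * W ω + B))
    (bound := fun ω => |a ω * W ω| * C') univ_mem
    (Eventually.of_forall fun s =>
      (integrable_mul_comp_affine ha hW hgc hgC s).aestronglyMeasurable)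
    (integrable_mul_comp_affine ha hW hgc hgC t)
    (integrable_mul_comp_affine haW hW hg' hg'C t).aestronglyMeasurable
    (ae_of_all _ fun ω s _ => ?_) (haW.abs.mul_const C') (ae_of_all _ fun ω s _ => ?_)).2
  · rw [Real.norm_eq_abs, abs_mul]
    exact mul_le_mul_of_nonneg_left (hg'C _) (abs_nonneg _)
  · refine (((hg _).comp s (((hasDerivAt_id s).mul_const (W ω)).add_const B)).const_mul
      (a ω)).congr_deriv ?_
    simp only [id, one_mul]
    ring

end ParametricIntegral

section Ffun

variable {Ω : Type*} [MeasurableSpace Ω] {μ : Measure Ω} {W : Ω → ℝ} {q : ℕ} {B : ℝ}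

lemma Ffun_eq_integral_pottsRatio :
    Ffun μ W q B = fun t => ∫ ω, W ω / (∫ ω', W ω' ∂μ) * pottsRatio q (t * W ω + B) ∂μ := by
  funext t
  simp only [Ffun, pottsRatio, mul_div_assoc]

lemma hasDerivAt_Ffun (hWint : Integrable W μ) (hW2 : Integrable (fun ω => W ω ^ 2) μ)
    (hq : 2 ≤ q) (t : ℝ) :
    HasDerivAt (Ffun μ W q B)
      (∫ ω, W ω / (∫ ω', W ω' ∂μ) * W ω * pottsRatioDeriv q (t * W ω + B) ∂μ) t := by
  rw [Ffun_eq_integral_pottsRatio]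
  exact hasDerivAt_integral_mul_comp_affine (hWint.div_const _)
    ((hW2.div_const _).congr (ae_of_all _ fun ω => by ring)) hWint.aestronglyMeasurable
    (hasDerivAt_pottsRatio (by omega)) (continuous_pottsRatioDeriv (by omega))
    (abs_pottsRatio_le_one hq) (abs_pottsRatioDeriv_le_one hq) t

lemma differentiable_Ffun (hWint : Integrable W μ) (hW2 : Integrable (fun ω => W ω ^ 2) μ)
    (hq : 2 ≤ q) : Differentiable ℝ (Ffun μ W q B) :=
  fun t => (hasDerivAt_Ffun hWint hW2 hq t).differentiableAt

lemma continuous_deriv_Ffun (hWint : Integrable W μ) (hW2 : Integrable (fun ω => W ω ^ 2) μ)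
    (hq : 2 ≤ q) : Continuous (deriv (Ffun μ W q B)) := by
  rw [show deriv (Ffun μ W q B) = _ from funext fun t => (hasDerivAt_Ffun hWint hW2 hq t).deriv]
  exact continuous_integral_mul_comp_affine
    ((hW2.div_const _).congr (ae_of_all _ fun ω => by ring)) hWint.aestronglyMeasurable
    (continuous_pottsRatioDeriv (by omega)) (abs_pottsRatioDeriv_le_one hq)

lemma Ffun_nonneg (hWnn : ∀ ω, 0 ≤ W ω) (hq : 1 ≤ q) (hB : 0 ≤ B) {t : ℝ} (ht : 0 ≤ t) :
    0 ≤ Ffun μ W q B t := by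
  rw [Ffun_eq_integral_pottsRatio]
  exact integral_nonneg fun ω => mul_nonneg (div_nonneg (hWnn ω) (integral_nonneg hWnn))
    (pottsRatio_nonneg hq (add_nonneg (mul_nonneg ht (hWnn ω)) hB))

lemma Ffun_pos (hWint : Integrable W μ) (hWnn : ∀ ω, 0 ≤ W ω) (hEW : 0 < ∫ ω, W ω ∂μ)
    (hq : 2 ≤ q) (hB : 0 ≤ B) {t : ℝ} (ht : 0 < t) : 0 < Ffun μ W q B t := by
  rw [Ffun_eq_integral_pottsRatio]
  dsimp only
  have hnn : ∀ ω, 0 ≤ W ω / (∫ ω', W ω' ∂μ) * pottsRatio q (t * W ω + B) := fun ω =>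
    mul_nonneg (div_nonneg (hWnn ω) hEW.le)
      (pottsRatio_nonneg (by omega) (add_nonneg (mul_nonneg ht.le (hWnn ω)) hB))
  rw [integral_pos_iff_support_of_nonneg hnn
    (integrable_mul_comp_affine (hWint.div_const _) hWint.aestronglyMeasurable
      (continuous_pottsRatio (by omega)) (abs_pottsRatio_le_one hq) t)]
  refine ((integral_pos_iff_support_of_nonneg hWnn hWint).1 hEW).trans_le (measure_mono ?_)
  intro ω hω
  have hWω : 0 < W ω := (hWnn ω).lt_of_ne' hω
  exact (mul_pos (div_pos hWω hEW) (pottsRatio_pos (by omega) (by positivity))).ne'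

lemma Ffun_le_one (hWint : Integrable W μ) (hWnn : ∀ ω, 0 ≤ W ω) (hEW : 0 < ∫ ω, W ω ∂μ)
    (hq : 2 ≤ q) (t : ℝ) : Ffun μ W q B t ≤ 1 := by
  rw [Ffun_eq_integral_pottsRatio]
  calc ∫ ω, W ω / (∫ ω', W ω' ∂μ) * pottsRatio q (t * W ω + B) ∂μ
      ≤ ∫ ω, W ω / (∫ ω', W ω' ∂μ) ∂μ :=
        integral_mono (integrable_mul_comp_affine (hWint.div_const _) hWint.aestronglyMeasurable
          (continuous_pottsRatio (by omega)) (abs_pottsRatio_le_one hq) t)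
          (hWint.div_const _) fun ω => mul_le_of_le_one_right (div_nonneg (hWnn ω) hEW.le)
            (abs_le.1 (abs_pottsRatio_le_one hq _)).2
    _ = 1 := by rw [integral_div, div_self hEW.ne']

end Ffun

theorem tangent_lines_general
    {Ω : Type*} [MeasurableSpace Ω] (μ : Measure Ω)
    (W : Ω → ℝ) (hWnn : ∀ ω, 0 ≤ W ω)
    (hWint : Integrable W μ) (hEW : 0 < ∫ ω, W ω ∂μ)
    (hW2 : Integrable (fun ω => (W ω) ^ 2) μ)
    (q : ℕ) (hq : 3 ≤ q) (B : ℝ) (hB0 : 0 ≤ B)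
    (tstar : ℝ) (htstar : 0 < tstar)
    -- zero-crossing condition (a): unique inflection point
    (hconvex : ∀ t : ℝ, 0 < t → t < tstar → 0 < deriv (deriv (Ffun μ W q B)) t)
    (hconcave : ∀ t : ℝ, tstar < t → deriv (deriv (Ffun μ W q B)) t < 0)
    -- zero-crossing condition (b): steepness at the inflection point
    (hsteep : Ffun μ W q B tstar / tstar < deriv (Ffun μ W q B) tstar) :
    ∃ ta tb : ℝ, 0 ≤ ta ∧ ta < tstar ∧ tstar < tb ∧
      Ffun μ W q B ta = ta * deriv (Ffun μ W q B) ta ∧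
      Ffun μ W q B tb = tb * deriv (Ffun μ W q B) tb ∧
      ∀ t : ℝ, 0 ≤ t → Ffun μ W q B t = t * deriv (Ffun μ W q B) t →
        t = ta ∨ t = tb := by
  have hq2 : 2 ≤ q := by omega
  exact exists_two_tangents_through_origin (differentiable_Ffun hWint hW2 hq2)
    (continuous_deriv_Ffun hWint hW2 hq2) htstar hconvex hconcave hsteep
    (Ffun_nonneg hWnn (by omega) hB0 le_rfl) (Ffun_pos hWint hWnn hEW hq2 hB0 htstar)
    (fun t _ => Ffun_le_one hWint hWnn hEW hq2 t)

/-- **Tangent lines**: under the zero-crossing condition, the equation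
`𝓕_B(t) = t·𝓕_B'(t)` has exactly two solutions `t_a < t_* < t_b` in `[0,∞)`. -/
theorem tangent_lines
    {Ω : Type*} [MeasurableSpace Ω] (μ : Measure Ω) [IsProbabilityMeasure μ]
    (W : Ω → ℝ) (hWmeas : Measurable W) (hWnn : ∀ ω, 0 ≤ W ω)
    (hWint : Integrable W μ) (hEW : 0 < ∫ ω, W ω ∂μ)
    (hW2 : Integrable (fun ω => (W ω) ^ 2) μ)
    (q : ℕ) (hq : 3 ≤ q) (B : ℝ) (hB0 : 0 ≤ B) (hB1 : B < Real.log (q - 1))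
    (tstar : ℝ) (htstar : 0 < tstar)
    -- zero-crossing condition (a): unique inflection point
    (hconvex : ∀ t : ℝ, 0 < t → t < tstar → 0 < deriv (deriv (Ffun μ W q B)) t)
    (hconcave : ∀ t : ℝ, tstar < t → deriv (deriv (Ffun μ W q B)) t < 0)
    -- zero-crossing condition (b): steepness at the inflection point
    (hsteep : Ffun μ W q B tstar / tstar < deriv (Ffun μ W q B) tstar) :
    ∃ ta tb : ℝ, 0 ≤ ta ∧ ta < tstar ∧ tstar < tb ∧
      Ffun μ W q B ta = ta * deriv (Ffun μ W q B) ta ∧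
      Ffun μ W q B tb = tb * deriv (Ffun μ W q B) tb ∧
      ∀ t : ℝ, 0 ≤ t → Ffun μ W q B t = t * deriv (Ffun μ W q B) t →
        t = ta ∨ t = tb :=
  tangent_lines_general μ W hWnn hWint hEW hW2 q hq B hB0 tstar htstar hconvex hconcave hsteep
end
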